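/- Fix λ, μ ∈ ℝ with λ + 2μ ≠ 0, α = (λ+μ)/(λ+2μ), a force vector (F1,F2,F3) ∈ ℝ³, and a source (ξ1,ξ2,ξ3) with ξ3 < 0. For a target (x1,x2,x3) with x3 + ξ3 < 0, set R1 = x1−ξ1, R2 = x2−ξ2, R3 = −(x3+ξ3), R = sqrt(R1^2+R2^2+R3^2), and define the C-image displacement u_1^C = (2−α) R1 F3/R³ + α ξ3 [F1/R³ − 3R1(F1R1 + F2R2 + F3R3)/R⁵], u_2^C = (2−α) R2 F3/R³ + α ξ3 [F2/R³ − 3R2(F1R1 + F2R2 + F3R3)/R⁵], u_3^C = (2−α)(R1F1 + R2F2)/R³ − α ξ3 [F3/R³ − 3R3(F1R1 + F2R2 + F3R3)/R⁵]. Then (u_1^C, u_2^C, u_3^C) = ∇_x Φ_𝒞 − (0, 0, ℋ), where Φ_𝒞(x) = −(2−α) F3/R + α ξ3 (F1R1 + F2R2 + F3R3)/R³ and ℋ(x) = −(2−α)(F1R1 + F2R2 + F3R3)/R³, the gradient being taken with respect to the target coordinates (x1,x2,x3). -/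

import Mathlib

/-- The scalar potential of the C image,
`Φ_𝒞 = −(2−α) F3/R + α ξ3 (F1R1 + F2R2 + F3R3)/R³`, in the image coordinates
`R1 = x1−ξ1`, `R2 = x2−ξ2`, `R3 = −(x3+ξ3)`, `R = sqrt(R1²+R2²+R3²)`. -/
noncomputable def PhiC (α F1 F2 F3 ξ1 ξ2 ξ3 x1 x2 x3 : ℝ) : ℝ :=
  let R1 := x1 - ξ1
  let R2 := x2 - ξ2
  let R3 := -(x3 + ξ3)
  let R := Real.sqrt (R1 ^ 2 + R2 ^ 2 + R3 ^ 2)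
  (-(2 - α) * F3 / R + α * ξ3 * (F1 * R1 + F2 * R2 + F3 * R3) / R ^ 3)

/-- The auxiliary harmonic function
`ℋ = −(2−α)(F1R1 + F2R2 + F3R3)/R³`. -/
noncomputable def Hc (α F1 F2 F3 ξ1 ξ2 ξ3 x1 x2 x3 : ℝ) : ℝ :=
  let R1 := x1 - ξ1
  let R2 := x2 - ξ2
  let R3 := -(x3 + ξ3)
  let R := Real.sqrt (R1 ^ 2 + R2 ^ 2 + R3 ^ 2)
  (-(2 - α) * (F1 * R1 + F2 * R2 + F3 * R3) / R ^ 3)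

set_option maxHeartbeats 1000000

lemma myaux {Q N : ℝ → ℝ} {Q' N' s A B : ℝ}
    (hQ : HasDerivAt Q Q' s) (hN : HasDerivAt N N' s) (h0 : 0 < Q s) :
    HasDerivAt (fun t => A / Real.sqrt (Q t) + B * N t / Real.sqrt (Q t) ^ 3)
      (-(A * Q') / (2 * Real.sqrt (Q s) ^ 3)
        + (B * N' / Real.sqrt (Q s) ^ 3
            - 3 * B * N s * Q' / (2 * Real.sqrt (Q s) ^ 5))) s := by
  have hs : Real.sqrt (Q s) ≠ 0 := ne_of_gt (Real.sqrt_pos.mpr h0)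
  have hr := hQ.sqrt (ne_of_gt h0)
  have h1 := (hasDerivAt_const s A).div hr hs
  have h2 := (hN.const_mul B).div (hr.pow 3) (pow_ne_zero 3 hs)
  have h := h1.add h2
  refine h.congr_deriv ?_
  have hsq : Real.sqrt (Q s) ^ 2 = Q s := Real.sq_sqrt h0.le
  simp only [Pi.pow_apply]; push_cast
  field_simp
  set r := Real.sqrt (Q s) with hrdef
  ring

/-- The C-image displacement satisfies `(u_1^C, u_2^C, u_3^C) = ∇_x Φ_𝒞 − (0,0,ℋ)`. -/
theorem Cimage_displacement_is_gradient
    (lam mu : ℝ) (h2 : lam + 2 * mu ≠ 0)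
    (α : ℝ) (hα : α = (lam + mu) / (lam + 2 * mu))
    (F1 F2 F3 ξ1 ξ2 ξ3 : ℝ) (hξ : ξ3 < 0)
    (x1 x2 x3 : ℝ) (hx : x3 + ξ3 < 0)
    (R1 R2 R3 R : ℝ)
    (hR1 : R1 = x1 - ξ1) (hR2 : R2 = x2 - ξ2) (hR3 : R3 = -(x3 + ξ3))
    (hR : R = Real.sqrt (R1 ^ 2 + R2 ^ 2 + R3 ^ 2)) :
    (2 - α) * R1 * F3 / R ^ 3
        + α * ξ3 * (F1 / R ^ 3 - 3 * R1 * (F1 * R1 + F2 * R2 + F3 * R3) / R ^ 5)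
      = deriv (fun t => PhiC α F1 F2 F3 ξ1 ξ2 ξ3 t x2 x3) x1 ∧
    (2 - α) * R2 * F3 / R ^ 3
        + α * ξ3 * (F2 / R ^ 3 - 3 * R2 * (F1 * R1 + F2 * R2 + F3 * R3) / R ^ 5)
      = deriv (fun t => PhiC α F1 F2 F3 ξ1 ξ2 ξ3 x1 t x3) x2 ∧
    (2 - α) * (R1 * F1 + R2 * F2) / R ^ 3
        - α * ξ3 * (F3 / R ^ 3 - 3 * R3 * (F1 * R1 + F2 * R2 + F3 * R3) / R ^ 5)
      = deriv (fun t => PhiC α F1 F2 F3 ξ1 ξ2 ξ3 x1 x2 t) x3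
          - Hc α F1 F2 F3 ξ1 ξ2 ξ3 x1 x2 x3 := by
  subst hR1 hR2 hR3 hR
  have h3pos : 0 < -(x3 + ξ3) := by linarith
  have h3sq : 0 < (-(x3 + ξ3)) ^ 2 := pow_pos h3pos 2
  have h0 : 0 < (x1 - ξ1) ^ 2 + (x2 - ξ2) ^ 2 + (-(x3 + ξ3)) ^ 2 := by
    nlinarith [sq_nonneg (x1 - ξ1), sq_nonneg (x2 - ξ2)]
  have hRpos : 0 < Real.sqrt ((x1 - ξ1) ^ 2 + (x2 - ξ2) ^ 2 + (-(x3 + ξ3)) ^ 2) :=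
    Real.sqrt_pos.mpr h0
  have hRne := ne_of_gt hRpos
  refine ⟨?_, ?_, ?_⟩
  · -- component 1
    have hQ : HasDerivAt (fun t => (t - ξ1) ^ 2 + (x2 - ξ2) ^ 2 + (-(x3 + ξ3)) ^ 2)
        (2 * (x1 - ξ1)) x1 := by
      have := ((((hasDerivAt_id x1).sub_const ξ1).pow 2).add_const
        ((x2 - ξ2) ^ 2)).add_const ((-(x3 + ξ3)) ^ 2)
      refine this.congr_deriv ?_
      push_cast [id_eq]; ring
    have hN : HasDerivAt
        (fun t => F1 * (t - ξ1) + F2 * (x2 - ξ2) + F3 * (-(x3 + ξ3))) F1 x1 := by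
      have := ((((hasDerivAt_id x1).sub_const ξ1).const_mul F1).add_const
        (F2 * (x2 - ξ2))).add_const (F3 * (-(x3 + ξ3)))
      refine this.congr_deriv ?_
      ring
    have key : HasDerivAt (fun t => PhiC α F1 F2 F3 ξ1 ξ2 ξ3 t x2 x3) _ x1 :=
      myaux (A := -(2 - α) * F3) (B := α * ξ3) hQ hN h0
    rw [key.deriv]
    field_simp
  · -- component 2
    have hQ : HasDerivAt (fun t => (x1 - ξ1) ^ 2 + (t - ξ2) ^ 2 + (-(x3 + ξ3)) ^ 2)
        (2 * (x2 - ξ2)) x2 := by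
      have := ((((hasDerivAt_id x2).sub_const ξ2).pow 2).const_add
        ((x1 - ξ1) ^ 2)).add_const ((-(x3 + ξ3)) ^ 2)
      refine this.congr_deriv ?_
      push_cast [id_eq]; ring
    have hN : HasDerivAt
        (fun t => F1 * (x1 - ξ1) + F2 * (t - ξ2) + F3 * (-(x3 + ξ3))) F2 x2 := by
      have := ((((hasDerivAt_id x2).sub_const ξ2).const_mul F2).const_add
        (F1 * (x1 - ξ1))).add_const (F3 * (-(x3 + ξ3)))
      refine this.congr_deriv ?_
      ring
    have key : HasDerivAt (fun t => PhiC α F1 F2 F3 ξ1 ξ2 ξ3 x1 t x3) _ x2 :=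
      myaux (A := -(2 - α) * F3) (B := α * ξ3) hQ hN h0
    rw [key.deriv]
    field_simp
  · -- component 3
    have hu : HasDerivAt (fun t : ℝ => -(t + ξ3)) (-1) x3 :=
      ((hasDerivAt_id x3).add_const ξ3).neg
    have hQ : HasDerivAt (fun t => (x1 - ξ1) ^ 2 + (x2 - ξ2) ^ 2 + (-(t + ξ3)) ^ 2)
        (2 * (x3 + ξ3)) x3 := by
      have := (hu.pow 2).const_add ((x1 - ξ1) ^ 2 + (x2 - ξ2) ^ 2)
      refine this.congr_deriv ?_
      push_cast [id_eq]; ring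
    have hN : HasDerivAt
        (fun t => F1 * (x1 - ξ1) + F2 * (x2 - ξ2) + F3 * (-(t + ξ3))) (-F3) x3 := by
      have := (hu.const_mul F3).const_add (F1 * (x1 - ξ1) + F2 * (x2 - ξ2))
      refine this.congr_deriv ?_
      ring
    have key : HasDerivAt (fun t => PhiC α F1 F2 F3 ξ1 ξ2 ξ3 x1 x2 t) _ x3 :=
      myaux (A := -(2 - α) * F3) (B := α * ξ3) hQ hN h0
    rw [key.deriv]
    simp only [Hc]
    field_simp
    ring
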